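/- Let H, D, c, z be as in the fundamental equation setup (H supported in [h₁,h₂] ⊂ (0,∞), D supported in [d₁,d₂] ⊂ (0,∞), c > 0, Im(z) > 0). Then the equation X = -∫ δ/(z - δc∫ τ/(τX+1) dH(τ)) dD(δ) has no real solution X. -/

import Mathlib

/-! For real `X` the inner integral is a real number `r`, so every denominator
`z - δ c r` has imaginary part `Im z > 0`. Hence `δ / (z - δ c r)` has negative imaginary part
for `δ > 0`, and averaging over `D` gives a right-hand side with positive imaginary part. -/

open MeasureTheory

theorem MeasureTheory.integral_pos_of_ae_pos {α : Type*} [MeasurableSpace α] {μ : Measure α}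
    [NeZero μ] {f : α → ℝ} (hf : ∀ᵐ x ∂μ, 0 < f x) (hfi : Integrable f μ) :
    0 < ∫ x, f x ∂μ := by
  refine (integral_pos_iff_support_of_nonneg_ae (hf.mono fun _ h => h.le) hfi).2 ?_
  refine pos_iff_ne_zero.2 fun hsupp => ?_
  obtain ⟨x, hpos, hx⟩ := (hf.and (measure_eq_zero_iff_ae_notMem.1 hsupp)).exists
  exact hx hpos.ne'

namespace Complex

variable {z : ℂ}

theorem im_sub_ofReal_mul_ofReal (z : ℂ) (δ a : ℝ) : (z - δ * a).im = z.im := by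
  simp

theorem sub_ofReal_mul_ofReal_ne_zero (hz : 0 < z.im) (δ a : ℝ) : z - δ * a ≠ 0 := fun h => by
  have him := im_sub_ofReal_mul_ofReal z δ a
  rw [h, zero_im] at him
  exact hz.ne' him.symm

theorem im_ofReal_div_sub_ofReal_mul_neg (hz : 0 < z.im) {δ : ℝ} (hδ : 0 < δ) (a : ℝ) :
    ((δ : ℂ) / (z - δ * a)).im < 0 := by
  have hnormSq : 0 < normSq (z - δ * a) := normSq_pos.2 (sub_ofReal_mul_ofReal_ne_zero hz δ a)
  rw [div_im, ofReal_im, ofReal_re, im_sub_ofReal_mul_ofReal, zero_mul, zero_div, zero_sub,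
    neg_lt_zero]
  positivity

theorem norm_ofReal_div_sub_ofReal_mul_le (hz : 0 < z.im) (δ a : ℝ) :
    ‖(δ : ℂ) / (z - δ * a)‖ ≤ |δ| / z.im := by
  rw [norm_div, norm_real, Real.norm_eq_abs]
  gcongr
  simpa using (le_abs_self _).trans (abs_im_le_norm (z - δ * a))

end Complex

open Complex

theorem integrable_ofReal_div_sub_ofReal_mul {D : Measure ℝ} [IsFiniteMeasure D] {z : ℂ}
    (hz : 0 < z.im) (a : ℝ) {M : ℝ} (hD : ∀ᵐ δ ∂D, |δ| ≤ M) :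
    Integrable (fun δ : ℝ => (δ : ℂ) / (z - δ * a)) D := by
  have hcont : Continuous fun δ : ℝ => (δ : ℂ) / (z - δ * a) := by
    exact Continuous.div (by fun_prop) (by fun_prop) fun δ => sub_ofReal_mul_ofReal_ne_zero hz δ a
  refine (integrable_const (M / z.im)).mono' hcont.aestronglyMeasurable ?_
  filter_upwards [hD] with δ hδ
  exact (norm_ofReal_div_sub_ofReal_mul_le hz δ a).trans (by gcongr)

theorem im_integral_ofReal_div_sub_ofReal_mul_neg {D : Measure ℝ} [IsFiniteMeasure D] [NeZero D]
    {z : ℂ} (hz : 0 < z.im) (a : ℝ) {M : ℝ} (hpos : ∀ᵐ δ ∂D, 0 < δ) (hbdd : ∀ᵐ δ ∂D, δ ≤ M) :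
    (∫ δ, (δ : ℂ) / (z - δ * a) ∂D).im < 0 := by
  have hint := integrable_ofReal_div_sub_ofReal_mul hz a (M := M) <| by
    filter_upwards [hpos, hbdd] with δ hδ hδM
    rwa [abs_of_pos hδ]
  have hneg : ∀ᵐ δ : ℝ ∂D, 0 < -((δ : ℂ) / (z - δ * a)).im := by
    filter_upwards [hpos] with δ hδ
    exact neg_pos.2 (im_ofReal_div_sub_ofReal_mul_neg hz hδ a)
  calc (∫ δ, (δ : ℂ) / (z - δ * a) ∂D).im
      = -∫ δ, -((δ : ℂ) / (z - δ * a)).im ∂D := by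
        rw [integral_neg, neg_neg]
        exact (integral_im hint).symm
    _ < 0 := neg_neg_of_pos (integral_pos_of_ae_pos hneg hint.im.neg)

theorem stmt9_general (d₁ d₂ : ℝ) (hd₁ : 0 < d₁) (c : ℝ) (H : Measure ℝ)
    (D : Measure ℝ) [IsProbabilityMeasure D] (hDsupp : D (Set.Icc d₁ d₂)ᶜ = 0)
    (z : ℂ) (hz : 0 < z.im) :
    ∀ X : ℝ, (X : ℂ) ≠ -∫ δ : ℝ, (δ : ℂ) /
        (z - (δ : ℂ) * (c : ℂ) * ∫ τ : ℝ, (τ : ℂ) / ((τ : ℂ) * (X : ℂ) + 1) ∂H) ∂D := by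
  intro X hX
  have hinner : ∫ τ : ℝ, (τ : ℂ) / ((τ : ℂ) * (X : ℂ) + 1) ∂H
      = ((∫ τ : ℝ, τ / (τ * X + 1) ∂H : ℝ) : ℂ) := by
    rw [← integral_complex_ofReal]
    push_cast
    rfl
  have hsupp : ∀ᵐ δ ∂D, δ ∈ Set.Icc d₁ d₂ := ae_iff.2 hDsupp
  have him := im_integral_ofReal_div_sub_ofReal_mul_neg hz (c * ∫ τ : ℝ, τ / (τ * X + 1) ∂H)
    (hsupp.mono fun δ hδ => hd₁.trans_le hδ.1) (hsupp.mono fun δ hδ => hδ.2)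
  push_cast at him
  simp_rw [hinner, mul_assoc] at hX
  have hXim := congrArg im hX
  simp only [ofReal_im, neg_im] at hXim
  linarith

/-- The fundamental equation admits no real solution. -/
theorem stmt9 (h₁ h₂ d₁ d₂ : ℝ) (hh₁ : 0 < h₁) (h12 : h₁ ≤ h₂)
    (hd₁ : 0 < d₁) (hd12 : d₁ ≤ d₂) (c : ℝ) (hc : 0 < c)
    (H : Measure ℝ) [IsProbabilityMeasure H] (hHsupp : H (Set.Icc h₁ h₂)ᶜ = 0)
    (D : Measure ℝ) [IsProbabilityMeasure D] (hDsupp : D (Set.Icc d₁ d₂)ᶜ = 0)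
    (z : ℂ) (hz : 0 < z.im) :
    ∀ X : ℝ, (X : ℂ) ≠ -∫ δ : ℝ, (δ : ℂ) /
        (z - (δ : ℂ) * (c : ℂ) * ∫ τ : ℝ, (τ : ℂ) / ((τ : ℂ) * (X : ℂ) + 1) ∂H) ∂D :=
  stmt9_general d₁ d₂ hd₁ c H D hDsupp z hz
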